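/- arXiv:2305.18062 — 2 statements merged into one kernel-verified Lean document; each statement's English description precedes it below -/
import Mathlib

section
/- For every r > 0 and all u, w ∈ ℝ, λ(((ℋ ∩ {y ≥ r}) + u) Δ ((ℋ ∩ {y ≥ r}) + w)) ≤ 2|u − w|/r, where Δ denotes symmetric difference and A + s denotes the horizontal translate {(x+s, y) : (x,y) ∈ A}. -/
open MeasureTheory

/-- The hyperbolic area measure on the upper half-plane: density `1/y²` w.r.t. Lebesgue. -/
noncomputable def hypMeasure : Measure (ℝ × ℝ) :=
  volume.withDensity (fun p => ENNReal.ofReal (1 / p.2 ^ 2))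

/-- The set ℋ = {(x,y) : y > 0, |x| < 1/2, y ≥ (2/π)·tan(π|x|)}. -/
def Hset : Set (ℝ × ℝ) :=
  {p | 0 < p.2 ∧ |p.1| < 1 / 2 ∧ (2 / Real.pi) * Real.tan (Real.pi * |p.1|) ≤ p.2}

/-- Horizontal translate of a subset of the plane. -/
def htrans (s : ℝ) (A : Set (ℝ × ℝ)) : Set (ℝ × ℝ) := (fun p => (p.1 + s, p.2)) '' A

/-
At height `y > 0` the horizontal slice of `ℋ` is the interval `|x| ≤ arctan (π y / 2) / π`, so at
every height `y ≥ r` the slices of the two translates are translates of one interval, whose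
symmetric difference has length at most `2 |u - w|`. Integrating slice by slice against `dy / y²`
bounds the hyperbolic area by `2 |u - w| ∫_r^∞ dy / y² = 2 |u - w| / r`.
-/

open Set Real
open scoped ENNReal

theorem Real.tan_le_iff_le_arctan {t z : ℝ} (ht : t ∈ Ioo (-(π / 2)) (π / 2)) :
    tan t ≤ z ↔ t ≤ arctan z := by
  rw [← arctan_le_arctan_iff, arctan_tan ht.1 ht.2]

theorem Set.Icc_symmDiff_Icc_subset {α : Type*} [LinearOrder α] (a b a' b' : α) :
    symmDiff (Icc a b) (Icc a' b') ⊆ uIcc a a' ∪ uIcc b b' := by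
  intro x hx
  simp only [mem_symmDiff, mem_Icc, mem_union, mem_uIcc] at hx ⊢
  grind

theorem volume_symmDiff_Icc_add_Icc_add_le (a b s t : ℝ) :
    volume (symmDiff (Icc (a + s) (b + s)) (Icc (a + t) (b + t))) ≤ ENNReal.ofReal (2 * |s - t|) :=
  calc volume (symmDiff (Icc (a + s) (b + s)) (Icc (a + t) (b + t)))
      ≤ volume (uIcc (a + s) (a + t)) + volume (uIcc (b + s) (b + t)) :=
        (measure_mono (Icc_symmDiff_Icc_subset _ _ _ _)).trans (measure_union_le _ _)
    _ = ENNReal.ofReal (2 * |s - t|) := by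
        rw [Real.volume_interval, Real.volume_interval, ← ENNReal.ofReal_add (abs_nonneg _)
          (abs_nonneg _), add_sub_add_left_eq_sub, add_sub_add_left_eq_sub, abs_sub_comm, two_mul]

theorem lintegral_Ici_inv_sq {r : ℝ} (hr : 0 < r) :
    ∫⁻ y in Ici r, ENNReal.ofReal (1 / y ^ 2) = ENNReal.ofReal (1 / r) := by
  rw [← Measure.restrict_congr_set Ioi_ae_eq_Ici]
  have hpow : EqOn (fun y : ℝ => ENNReal.ofReal (1 / y ^ 2))
      (fun y => ENNReal.ofReal (y ^ (-2 : ℝ))) (Ioi r) := fun y hy => by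
    dsimp only
    rw [rpow_neg (hr.trans hy).le, rpow_two, one_div]
  rw [setLIntegral_congr_fun measurableSet_Ioi hpow,
    ← ofReal_integral_eq_lintegral_ofReal (integrableOn_Ioi_rpow_of_lt (by norm_num) hr)
      ((ae_restrict_iff' measurableSet_Ioi).mpr
        (ae_of_all _ fun y hy => rpow_nonneg (hr.trans hy).le _)),
    integral_Ioi_rpow_of_lt (by norm_num) hr]
  norm_num [rpow_neg_one]

theorem setOf_prodMk_mem_symmDiff {α β : Type*} (s t : Set (α × β)) (y : β) :
    {x | (x, y) ∈ symmDiff s t} = symmDiff {x | (x, y) ∈ s} {x | (x, y) ∈ t} :=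
  preimage_symmDiff _ _

theorem withDensity_snd_apply {α β : Type*} [MeasurableSpace α] [MeasurableSpace β]
    {μ : Measure α} {ν : Measure β} [SFinite μ] [SFinite ν] {g : β → ℝ≥0∞} (hg : Measurable g)
    {s : Set (α × β)} (hs : MeasurableSet s) :
    (μ.prod ν).withDensity (fun z => g z.2) s = ∫⁻ y, g y * μ ((fun x => (x, y)) ⁻¹' s) ∂ν := by
  rw [← prod_withDensity_right hg, Measure.prod_apply_symm hs,
    lintegral_withDensity_eq_lintegral_mul _ hg (measurable_measure_prodMk_right hs)]
  rfl

theorem hypMeasure_apply {s : Set (ℝ × ℝ)} (hs : MeasurableSet s) :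
    hypMeasure s = ∫⁻ y, ENNReal.ofReal (1 / y ^ 2) * volume {x | (x, y) ∈ s} := by
  have h := withDensity_snd_apply (μ := (volume : Measure ℝ)) (ν := (volume : Measure ℝ))
    (g := fun y => ENNReal.ofReal (1 / y ^ 2)) (by fun_prop) hs
  rwa [← Measure.volume_eq_prod] at h

theorem htrans_eq_preimage (s : ℝ) (A : Set (ℝ × ℝ)) :
    htrans s A = (fun p : ℝ × ℝ => (p.1 - s, p.2)) ⁻¹' A := by
  ext ⟨x, y⟩
  constructor
  · rintro ⟨⟨a, b⟩, hp, h⟩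
    obtain ⟨rfl, rfl⟩ := Prod.mk.inj h
    simpa using hp
  · intro h
    exact ⟨(x - s, y), h, by simp⟩

theorem MeasurableSet.htrans {A : Set (ℝ × ℝ)} (hA : MeasurableSet A) (s : ℝ) :
    MeasurableSet (htrans s A) := by
  rw [htrans_eq_preimage]
  exact hA.preimage (by fun_prop)

theorem setOf_prodMk_mem_htrans (s : ℝ) (A : Set (ℝ × ℝ)) (y : ℝ) :
    {x | (x, y) ∈ htrans s A} = (fun x => x - s) ⁻¹' {x | (x, y) ∈ A} := by
  rw [htrans_eq_preimage]
  rfl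

theorem volume_setOf_mem_symmDiff_htrans_le {A : Set (ℝ × ℝ)} {y a b : ℝ}
    (hA : {x | (x, y) ∈ A} = Icc a b) (u w : ℝ) :
    volume {x | (x, y) ∈ symmDiff (htrans u A) (htrans w A)} ≤ ENNReal.ofReal (2 * |u - w|) := by
  have hslice (s : ℝ) : {x | (x, y) ∈ htrans s A} = Icc (a + s) (b + s) := by
    rw [setOf_prodMk_mem_htrans, hA, preimage_sub_const_Icc]
  rw [setOf_prodMk_mem_symmDiff, hslice, hslice]
  exact volume_symmDiff_Icc_add_Icc_add_le a b u w

theorem Hset_eq : Hset = {p | 0 < p.2 ∧ |p.1| ≤ arctan (π * p.2 / 2) / π} := by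
  ext ⟨x, y⟩
  show 0 < y ∧ |x| < 1 / 2 ∧ 2 / π * tan (π * |x|) ≤ y ↔
    0 < y ∧ |x| ≤ arctan (π * y / 2) / π
  refine and_congr_right fun _ => ?_
  have hπx : |x| < 1 / 2 → π * |x| ∈ Ioo (-(π / 2)) (π / 2) := fun h => by
    constructor <;> nlinarith [pi_pos, abs_nonneg x]
  have hbound : |x| ≤ arctan (π * y / 2) / π → |x| < 1 / 2 := fun h =>
    h.trans_lt <| by rw [div_lt_iff₀ pi_pos]; linarith [arctan_lt_pi_div_two (π * y / 2)]
  constructor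
  · rintro ⟨hx, h⟩
    rw [le_div_iff₀ pi_pos, mul_comm, ← tan_le_iff_le_arctan (hπx hx)]
    rw [div_mul_eq_mul_div, div_le_iff₀ pi_pos] at h
    linarith
  · intro h
    have hx := hbound h
    refine ⟨hx, ?_⟩
    rw [le_div_iff₀ pi_pos, mul_comm, ← tan_le_iff_le_arctan (hπx hx)] at h
    rw [div_mul_eq_mul_div, div_le_iff₀ pi_pos]
    linarith

theorem measurableSet_Hset : MeasurableSet Hset := by
  rw [Hset_eq]
  have hc : Continuous fun p : ℝ × ℝ => arctan (π * p.2 / 2) / π := by fun_prop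
  exact (measurableSet_lt measurable_const measurable_snd).inter
    (measurableSet_le (by fun_prop) hc.measurable)

theorem setOf_prodMk_mem_Hset {y : ℝ} (hy : 0 < y) :
    {x | (x, y) ∈ Hset} = Icc (-(arctan (π * y / 2) / π)) (arctan (π * y / 2) / π) := by
  ext x
  simp [Hset_eq, hy, abs_le]

theorem volume_setOf_mem_symmDiff_htrans_truncation_le {r : ℝ} (hr : 0 < r) (u w y : ℝ) :
    volume {x | (x, y) ∈ symmDiff (htrans u (Hset ∩ {p | r ≤ p.2}))
        (htrans w (Hset ∩ {p | r ≤ p.2}))} ≤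
      (Ici r).indicator (fun _ => ENNReal.ofReal (2 * |u - w|)) y := by
  by_cases hy : r ≤ y
  · have hslice : {x | (x, y) ∈ Hset ∩ {p | r ≤ p.2}} = {x | (x, y) ∈ Hset} := by
      ext; simp [hy]
    rw [setOf_prodMk_mem_Hset (hr.trans_le hy)] at hslice
    rw [indicator_of_mem (mem_Ici.2 hy)]
    exact volume_setOf_mem_symmDiff_htrans_le hslice u w
  · have hslice : {x | (x, y) ∈ Hset ∩ {p | r ≤ p.2}} = ∅ := by
      ext; simp [hy]
    rw [indicator_of_notMem (by simpa using hy), setOf_prodMk_mem_symmDiff,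
      setOf_prodMk_mem_htrans, setOf_prodMk_mem_htrans, hslice, preimage_empty, preimage_empty,
      symmDiff_self, bot_eq_empty, measure_empty]

theorem stmt5 (r : ℝ) (hr : 0 < r) (u w : ℝ) :
    hypMeasure
        (symmDiff (htrans u (Hset ∩ {p | r ≤ p.2})) (htrans w (Hset ∩ {p | r ≤ p.2}))) ≤
      ENNReal.ofReal (2 * |u - w| / r) := by
  set A := Hset ∩ {p : ℝ × ℝ | r ≤ p.2}
  have hA : MeasurableSet A :=
    measurableSet_Hset.inter (measurableSet_le measurable_const measurable_snd)
  calc hypMeasure (symmDiff (htrans u A) (htrans w A))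
      = ∫⁻ y, ENNReal.ofReal (1 / y ^ 2) *
          volume {x | (x, y) ∈ symmDiff (htrans u A) (htrans w A)} :=
        hypMeasure_apply ((hA.htrans u).symmDiff (hA.htrans w))
    _ ≤ ∫⁻ y, ENNReal.ofReal (1 / y ^ 2) *
          (Ici r).indicator (fun _ => ENNReal.ofReal (2 * |u - w|)) y := by
        gcongr with y
        exact volume_setOf_mem_symmDiff_htrans_truncation_le hr u w y
    _ = ENNReal.ofReal (2 * |u - w| / r) := by
        simp_rw [← indicator_mul_right _ fun y : ℝ => ENNReal.ofReal (1 / y ^ 2)]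
        rw [lintegral_indicator measurableSet_Ici, lintegral_mul_const _ (by fun_prop),
          lintegral_Ici_inv_sq hr, ← ENNReal.ofReal_mul (by positivity)]
        ring_nf
end

section
/- For every κ ∈ (0,1) there exists ε > 0 such that the following holds for every d > 0 and every σ ∈ (0, ε·d]. Let (Y_m)_{m≥0} be the oscillating random walk with parameters d, σ started at 0. Then for every integer N ≥ 1, the probability that the number of indices m with 0 ≤ m ≤ 3N and |Y_m| ≤ d is smaller than N/7 is at most κ^N. -/
open MeasureTheory ProbabilityTheory

/-- The oscillating random walk with parameters `d`, `σ`, started at `u`, driven by the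
noise sequence `ξ`: the increment drifts by `-d` above `d`, by `d` below `-d`, and has
zero drift (and doubled noise) inside `[-d, d]`. -/
noncomputable def oscWalk (Ω : Type*) (d σ u : ℝ) (ξ : ℕ → Ω → ℝ) : ℕ → Ω → ℝ
  | 0 => fun _ => u
  | m + 1 => fun ω =>
      let y := oscWalk Ω d σ u ξ m ω
      y + (if d < y then -d else if y < -d then d else 0) +
        σ * (if |y| ≤ d then 2 else 1) * ξ (m + 1) ω

/-!
Outside `[-d, d]` a step moves the walk towards the interval by `d`, up to the noise `σ |ξ|`;
inside it moves by at most `2 σ |ξ|`. Summing over `3N + 1` steps,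
`d (3N + 1) ≤ 2d · #visits + 2σ ∑ |ξ_i|`, so fewer than `N / 7` visits force
`∑ |ξ_i| ≥ N d / σ ≥ N / ε`. Since `E exp |ξ| < ∞`, the Chernoff bound makes this event
exponentially unlikely once `1 / ε` is large.
-/

open Real Finset

lemma abs_oscStep_add_le {d σ y x : ℝ} (hd : 0 ≤ d) (hσ : 0 ≤ σ) :
    |y + (if d < y then -d else if y < -d then d else 0) + σ * (if |y| ≤ d then 2 else 1) * x|
        + d ≤ |y| + 2 * d * (if |y| ≤ d then 1 else 0) + 2 * σ * |x| := by
  have hσx : |σ * x| = σ * |x| := by rw [abs_mul, abs_of_nonneg hσ]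
  have hσx0 : 0 ≤ σ * |x| := mul_nonneg hσ (abs_nonneg x)
  rcases le_or_gt |y| d with hin | hout
  · obtain ⟨hlo, hhi⟩ := abs_le.1 hin
    rw [if_neg hhi.not_gt, if_neg hlo.not_gt, if_pos hin, if_pos hin]
    have := abs_add_le y (2 * (σ * x))
    rw [abs_mul, hσx, abs_two] at this
    rw [show y + 0 + σ * 2 * x = y + 2 * (σ * x) by ring]
    linarith
  · rw [if_neg hout.not_ge, if_neg hout.not_ge, mul_one]
    rcases lt_abs.1 hout with hpos | hneg
    · rw [if_pos hpos]
      have := abs_add_le (y - d) (σ * x)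
      rw [abs_of_pos (sub_pos.2 hpos), hσx] at this
      rw [abs_of_pos (hd.trans_lt hpos), ← sub_eq_add_neg]
      linarith
    · rw [if_neg (by linarith), if_pos (by linarith)]
      have := abs_add_le (y + d) (σ * x)
      rw [abs_of_neg (by linarith : y + d < 0), hσx] at this
      rw [abs_of_neg (by linarith : y < 0)]
      linarith

lemma abs_oscWalk_add_le {Ω : Type*} {d σ : ℝ} (hd : 0 ≤ d) (hσ : 0 ≤ σ) (u : ℝ)
    (ξ : ℕ → Ω → ℝ) (ω : Ω) (K : ℕ) :
    |oscWalk Ω d σ u ξ K ω| + d * K ≤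
      |u| + 2 * d * #{m ∈ range K | |oscWalk Ω d σ u ξ m ω| ≤ d}
        + 2 * σ * ∑ i ∈ range K, |ξ (i + 1) ω| := by
  induction K with
  | zero => simp [oscWalk]
  | succ K ih =>
    have hstep := abs_oscStep_add_le (y := oscWalk Ω d σ u ξ K ω) (x := ξ (K + 1) ω) hd hσ
    rw [natCast_card_filter] at ih ⊢
    rw [sum_range_succ, sum_range_succ]
    push_cast
    simp only [oscWalk] at hstep ⊢
    linarith

lemma le_sum_abs_noise_of_card_lt {Ω : Type*} {d σ : ℝ} (hd : 0 ≤ d) (hσ : 0 ≤ σ)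
    (ξ : ℕ → Ω → ℝ) (ω : Ω) (N : ℕ)
    (hfew : (#{m ∈ range (3 * N + 1) | |oscWalk Ω d σ 0 ξ m ω| ≤ d} : ℝ) < N / 7) :
    N * d ≤ σ * ∑ i ∈ range (3 * N + 1), |ξ (i + 1) ω| := by
  have hwalk := abs_oscWalk_add_le hd hσ 0 ξ ω (3 * N + 1)
  have hvisits := mul_le_mul_of_nonneg_left hfew.le (by positivity : 0 ≤ 2 * d)
  push_cast [abs_zero] at hwalk
  linarith [abs_nonneg (oscWalk Ω d σ 0 ξ (3 * N + 1) ω), mul_nonneg hd N.cast_nonneg]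

lemma integrable_exp_abs_gaussianReal (μ : ℝ) (v : NNReal) :
    Integrable (fun x ↦ exp |x|) (gaussianReal μ v) := by
  refine ((integrable_exp_mul_gaussianReal 1).add (integrable_exp_mul_gaussianReal (-1))).mono'
    (by fun_prop) (ae_of_all _ fun x ↦ ?_)
  rw [norm_of_nonneg (exp_pos _).le]
  rcases abs_cases x with ⟨h, _⟩ | ⟨h, _⟩ <;> rw [h] <;> simp [(exp_pos _).le]

lemma one_le_integral_exp_abs {μ : Measure ℝ} [IsProbabilityMeasure μ]
    (hint : Integrable (fun x ↦ exp |x|) μ) : 1 ≤ ∫ x, exp |x| ∂μ := by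
  simpa using integral_mono (integrable_const 1) hint fun x ↦ one_le_exp (abs_nonneg x)

lemma measureReal_le_sum_abs_le {ι Ω : Type*} [MeasurableSpace Ω] {P : Measure Ω}
    {X : ι → Ω → ℝ} {μ : Measure ℝ} (hmeas : ∀ i, Measurable (X i)) (hindep : iIndepFun X P)
    (hlaw : ∀ i, P.map (X i) = μ) (hint : Integrable (fun x ↦ exp |x|) μ) (s : Finset ι) (t : ℝ) :
    P.real {ω | t ≤ ∑ i ∈ s, |X i ω|} ≤ exp (-t) * (∫ x, exp |x| ∂μ) ^ #s := by
  have := hindep.isProbabilityMeasure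
  have habs_meas : ∀ i, Measurable fun ω ↦ |X i ω| := fun i ↦ (hmeas i).abs
  have habs_indep : iIndepFun (fun i ω ↦ |X i ω|) P :=
    hindep.comp (fun _ x ↦ |x|) fun _ ↦ measurable_abs
  have hmgf : ∀ i, mgf (fun ω ↦ |X i ω|) P 1 = ∫ x, exp |x| ∂μ := fun i ↦ by
    rw [← hlaw i, integral_map (hmeas i).aemeasurable (by fun_prop)]
    simp [mgf]
  have hint_X : ∀ i, Integrable (fun ω ↦ exp (1 * |X i ω|)) P := fun i ↦ by
    rw [← hlaw i] at hint
    simpa [Function.comp_def] using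
      (integrable_map_measure (by fun_prop) (hmeas i).aemeasurable).1 hint
  have hchernoff := measure_ge_le_exp_mul_mgf t zero_le_one
    (habs_indep.integrable_exp_mul_sum habs_meas (s := s) fun i _ ↦ hint_X i)
  rw [habs_indep.mgf_sum habs_meas, prod_congr rfl fun i _ ↦ hmgf i, prod_const] at hchernoff
  simpa [Finset.sum_apply] using hchernoff

theorem stmt19 (κ : ℝ) (hκ : κ ∈ Set.Ioo (0 : ℝ) 1) :
    ∃ ε : ℝ, 0 < ε ∧
      ∀ d : ℝ, 0 < d → ∀ σ : ℝ, 0 < σ → σ ≤ ε * d →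
      ∀ (Ω : Type) (_ : MeasurableSpace Ω) (P : Measure Ω), IsProbabilityMeasure P →
      ∀ ξ : ℕ → Ω → ℝ, (∀ i, Measurable (ξ i)) →
        iIndepFun ξ P →
        (∀ i, Measure.map (ξ i) P = gaussianReal 0 1) →
        ∀ N : ℕ, 1 ≤ N →
          P {ω | (((Finset.range (3 * N + 1)).filter
              (fun m => |oscWalk Ω d σ 0 ξ m ω| ≤ d)).card : ℝ) < (N : ℝ) / 7} ≤
            ENNReal.ofReal (κ ^ N) := by
  obtain ⟨hκ0, hκ1⟩ := hκ
  have hint := integrable_exp_abs_gaussianReal 0 1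
  set C := ∫ x, exp |x| ∂gaussianReal 0 1
  have hC : 1 ≤ C := one_le_integral_exp_abs hint
  -- `exp (-L) = κ / C ^ 4` absorbs the factor `C ^ (3 * N + 1) ≤ C ^ (4 * N)` of Chernoff's bound.
  set L := log (C ^ 4 / κ)
  have hL : 0 < L := log_pos <| (one_lt_div hκ0).2 (hκ1.trans_le (one_le_pow₀ hC))
  refine ⟨L⁻¹, inv_pos.2 hL, fun d hd σ hσ hσε Ω _ P _ ξ hmeas hindep hlaw N hN ↦ ?_⟩
  have htail := measureReal_le_sum_abs_le (fun i ↦ hmeas (i + 1))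
    (hindep.precomp Nat.succ_injective) (fun i ↦ hlaw (i + 1)) hint (range (3 * N + 1)) (N * L)
  have hsub : {ω | (#{m ∈ range (3 * N + 1) | |oscWalk Ω d σ 0 ξ m ω| ≤ d} : ℝ) < N / 7} ⊆
      {ω | N * L ≤ ∑ i ∈ range (3 * N + 1), |ξ (i + 1) ω|} := fun ω hfew ↦ by
    have hnoise := le_sum_abs_noise_of_card_lt hd.le hσ.le ξ ω N hfew
    have hσL : σ * L ≤ d := by rwa [← le_div_iff₀ hL, div_eq_inv_mul]
    refine le_of_mul_le_mul_left ?_ hσ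
    linarith [mul_le_mul_of_nonneg_left hσL N.cast_nonneg]
  have hbound : exp (-(N * L)) * C ^ #(range (3 * N + 1)) ≤ κ ^ N := calc
    _ ≤ exp (-L) ^ N * (C ^ 4) ^ N := by
      rw [card_range, ← exp_nat_mul, ← pow_mul, mul_neg]
      gcongr
      omega
    _ = κ ^ N := by
      rw [exp_neg, exp_log (by positivity), ← mul_pow, inv_div, div_mul_cancel₀ _ (by positivity)]
  calc P _ ≤ P {ω | N * L ≤ ∑ i ∈ range (3 * N + 1), |ξ (i + 1) ω|} := measure_mono hsub
    _ = ENNReal.ofReal (P.real _) := (ofReal_measureReal).symm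
    _ ≤ ENNReal.ofReal (κ ^ N) := ENNReal.ofReal_le_ofReal (htail.trans hbound)
end
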